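/- In the 3-dimensional model, any two distinct points lie on a unique line of the model: if both points are on the same vertical line a_k this line is unique; otherwise the two points lie on distinct vertical lines a_j ≠ a_k, and there is a unique plane through the origin containing both points, which cuts out the unique five-point line through them (incidence axioms I1 and I2). -/

import Mathlib

/-!
A model point lies on exactly one vertical line, because the pentagon vertices are distinct.
Two distinct points on the same vertical line differ only in height, so a plane through the
origin containing both is vertical: the vertical line is the only line through them. For
points `X`, `Y` on different vertical lines, no two vertices of the pentagon are antipodal
(5 is odd), so the vertical component of `X ⨯₃ Y` is nonzero and the plane with normal
`X ⨯₃ Y` gives a five-point line through both; any other admissible normal is orthogonal to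
`X` and `Y`, hence a multiple of `X ⨯₃ Y`.
-/

open Real

noncomputable section

/-- The vertices of the regular pentagon in the horizontal plane of `ℝ³`. -/
def pentagonPt (k : Fin 5) : Fin 3 → ℝ :=
  ![Real.cos (2 * π * (k.val : ℝ) / 5), Real.sin (2 * π * (k.val : ℝ) / 5), 0]

/-- The vertical unit direction. -/
def e3 : Fin 3 → ℝ := ![0, 0, 1]

/-- The vertical line of the model over the `k`-th pentagon vertex. -/
def vertLine (k : Fin 5) : Set (Fin 3 → ℝ) := {x | ∃ t : ℝ, x = pentagonPt k + t • e3}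

/-- The points of the model: the union of the five vertical lines. -/
def ModelPoints : Set (Fin 3 → ℝ) := ⋃ k, vertLine k

/-- Euclidean dot product in `ℝ³`. -/
def dot (n x : Fin 3 → ℝ) : ℝ := n 0 * x 0 + n 1 * x 1 + n 2 * x 2

/-- A five-point line of the model: the trace on the model points of a plane through the
origin with non-horizontal normal (such a plane contains no vertical line). -/
def IsFivePointLine (l : Set (Fin 3 → ℝ)) : Prop :=
  ∃ n : Fin 3 → ℝ, n 2 ≠ 0 ∧ l = {x ∈ ModelPoints | dot n x = 0}

/-- A line of the model: a vertical line or a five-point line. -/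
def IsModelLine (l : Set (Fin 3 → ℝ)) : Prop :=
  (∃ k, l = vertLine k) ∨ IsFivePointLine l

open Matrix

lemma dot_eq_dotProduct (n x : Fin 3 → ℝ) : dot n x = n ⬝ᵥ x := by
  simp [dot, dotProduct, Fin.sum_univ_three]

lemma mem_vertLine_iff {X : Fin 3 → ℝ} {k : Fin 5} :
    X ∈ vertLine k ↔
      X 0 = cos (2 * π * (k.val : ℝ) / 5) ∧ X 1 = sin (2 * π * (k.val : ℝ) / 5) := by
  constructor
  · rintro ⟨t, rfl⟩
    simp [pentagonPt, e3]
  · rintro ⟨h0, h1⟩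
    refine ⟨X 2, funext fun i => ?_⟩
    fin_cases i <;> simp [pentagonPt, e3, h0, h1]

/-- No two vertices of the regular pentagon are antipodal or equal. -/
lemma sin_sub_ne_zero_of_ne {j k : Fin 5} (h : j ≠ k) :
    sin (2 * π * (k.val : ℝ) / 5 - 2 * π * (j.val : ℝ) / 5) ≠ 0 := by
  rw [Ne, sin_eq_zero_iff]
  rintro ⟨m, hm⟩
  have hreal : (5 * m : ℝ) = 2 * (k.val : ℝ) - 2 * (j.val : ℝ) :=
    mul_right_cancel₀ pi_ne_zero (by linear_combination 5 * hm)
  have hint : 5 * m = 2 * (k.val : ℤ) - 2 * (j.val : ℤ) := by exact_mod_cast hreal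
  exact h (Fin.ext (by omega))

lemma eq_of_mem_vertLine {X : Fin 3 → ℝ} {j k : Fin 5} (hj : X ∈ vertLine j)
    (hk : X ∈ vertLine k) : j = k := by
  rw [mem_vertLine_iff] at hj hk
  by_contra hne
  apply sin_sub_ne_zero_of_ne hne
  rw [sin_sub, ← hj.1, ← hj.2, hk.1, hk.2]
  ring

lemma cross_apply_two_ne_zero {X Y : Fin 3 → ℝ} {j k : Fin 5} (hX : X ∈ vertLine j)
    (hY : Y ∈ vertLine k) (hjk : j ≠ k) : (X ⨯₃ Y) 2 ≠ 0 := by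
  rw [mem_vertLine_iff] at hX hY
  have h : (X ⨯₃ Y) 2 = sin (2 * π * (k.val : ℝ) / 5 - 2 * π * (j.val : ℝ) / 5) := by
    rw [sin_sub, ← hX.1, ← hX.2, ← hY.1, ← hY.2]
    simp [cross_apply]
    ring
  exact h ▸ sin_sub_ne_zero_of_ne hjk

lemma apply_two_eq_zero_of_dot_eq_zero {n X Y : Fin 3 → ℝ} (h0 : X 0 = Y 0) (h1 : X 1 = Y 1)
    (hXY : X ≠ Y) (hX : dot n X = 0) (hY : dot n Y = 0) : n 2 = 0 := by
  have h2 : X 2 - Y 2 ≠ 0 :=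
    sub_ne_zero.mpr fun h2 => hXY (funext fun i => by fin_cases i <;> assumption)
  have key : n 2 * (X 2 - Y 2) = 0 := by
    unfold dot at hX hY
    linear_combination hX - hY - n 0 * h0 - n 1 * h1
  exact (mul_eq_zero.mp key).resolve_right h2

lemma smul_eq_smul_of_cross_eq_zero {R : Type*} [CommRing R] {n m : Fin 3 → R}
    (h : n ⨯₃ m = 0) : m 2 • n = n 2 • m := by
  have e0 := congrFun h 0
  have e1 := congrFun h 1
  simp only [cross_apply, Fin.isValue, cons_val, Pi.zero_apply] at e0 e1
  ext i
  fin_cases i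
  · simp only [Fin.zero_eta, Fin.isValue, Pi.smul_apply, smul_eq_mul]
    linear_combination -e1
  · simp only [Fin.mk_one, Fin.isValue, Pi.smul_apply, smul_eq_mul]
    linear_combination e0
  · simp only [Fin.reduceFinMk, Fin.isValue, Pi.smul_apply, smul_eq_mul]
    ring

lemma smul_cross_eq_smul_of_dotProduct_eq_zero {R : Type*} [CommRing R] {m X Y : Fin 3 → R}
    (hX : m ⬝ᵥ X = 0) (hY : m ⬝ᵥ Y = 0) : m 2 • (X ⨯₃ Y) = (X ⨯₃ Y) 2 • m := by
  apply smul_eq_smul_of_cross_eq_zero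
  rw [cross_cross_eq_smul_sub_smul, dotProduct_comm, hX, dotProduct_comm, hY, zero_smul,
    zero_smul, sub_zero]

lemma dot_eq_zero_iff_of_smul_eq {m n : Fin 3 → ℝ} (hm : m 2 ≠ 0) (hn : n 2 ≠ 0)
    (h : m 2 • n = n 2 • m) (x : Fin 3 → ℝ) : dot m x = 0 ↔ dot n x = 0 := by
  have hx : m 2 * dot n x = n 2 * dot m x := by
    simp only [dot_eq_dotProduct, ← smul_eq_mul, ← smul_dotProduct, h]
  constructor <;> intro h0
  · simpa [h0, hm] using hx
  · simpa [h0, hn] using hx.symm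

lemma existsUnique_modelLine_of_mem_vertLine {X Y : Fin 3 → ℝ} {k : Fin 5}
    (hX : X ∈ vertLine k) (hY : Y ∈ vertLine k) (hXY : X ≠ Y) :
    ∃! l : Set (Fin 3 → ℝ), IsModelLine l ∧ X ∈ l ∧ Y ∈ l := by
  refine ⟨vertLine k, ⟨Or.inl ⟨k, rfl⟩, hX, hY⟩, ?_⟩
  rintro l ⟨⟨k', rfl⟩ | ⟨m, hm, rfl⟩, hXl, hYl⟩
  · exact congrArg vertLine (eq_of_mem_vertLine hXl hX)
  · obtain ⟨hX0, hX1⟩ := mem_vertLine_iff.mp hX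
    obtain ⟨hY0, hY1⟩ := mem_vertLine_iff.mp hY
    exact absurd (apply_two_eq_zero_of_dot_eq_zero (hX0.trans hY0.symm)
      (hX1.trans hY1.symm) hXY hXl.2 hYl.2) hm

lemma existsUnique_modelLine_of_mem_vertLine_of_ne {X Y : Fin 3 → ℝ} {j k : Fin 5}
    (hX : X ∈ vertLine j) (hY : Y ∈ vertLine k) (hjk : j ≠ k) :
    ∃! l : Set (Fin 3 → ℝ), IsModelLine l ∧ X ∈ l ∧ Y ∈ l := by
  have hn := cross_apply_two_ne_zero hX hY hjk
  have hXm : X ∈ ModelPoints := Set.mem_iUnion.mpr ⟨j, hX⟩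
  have hYm : Y ∈ ModelPoints := Set.mem_iUnion.mpr ⟨k, hY⟩
  refine ⟨{x ∈ ModelPoints | dot (X ⨯₃ Y) x = 0}, ⟨Or.inr ⟨_, hn, rfl⟩,
    ⟨hXm, ?_⟩, ⟨hYm, ?_⟩⟩, ?_⟩
  · rw [dot_eq_dotProduct, dotProduct_comm, dot_self_cross]
  · rw [dot_eq_dotProduct, dotProduct_comm, dot_cross_self]
  rintro l ⟨⟨k', rfl⟩ | ⟨m, hm, rfl⟩, hXl, hYl⟩
  · exact absurd ((eq_of_mem_vertLine hXl hX).symm.trans (eq_of_mem_vertLine hYl hY)) hjk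
  · simp only [Set.mem_ofPred_eq, dot_eq_dotProduct] at hXl hYl
    have hpar := smul_cross_eq_smul_of_dotProduct_eq_zero hXl.2 hYl.2
    ext x
    exact and_congr_right fun _ => dot_eq_zero_iff_of_smul_eq hm hn hpar x

/-- Incidence axioms I1 and I2 in the model: any two distinct points of the model lie on
exactly one line of the model. -/
theorem model_I1_I2 :
    ∀ X Y : Fin 3 → ℝ, X ∈ ModelPoints → Y ∈ ModelPoints → X ≠ Y →
      ∃! l : Set (Fin 3 → ℝ), IsModelLine l ∧ X ∈ l ∧ Y ∈ l := by
  intro X Y hX hY hXY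
  obtain ⟨j, hXj⟩ := Set.mem_iUnion.mp hX
  obtain ⟨k, hYk⟩ := Set.mem_iUnion.mp hY
  rcases eq_or_ne j k with rfl | hjk
  · exact existsUnique_modelLine_of_mem_vertLine hXj hYk hXY
  · exact existsUnique_modelLine_of_mem_vertLine_of_ne hXj hYk hjk

end
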